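/- 𝓛_# = span(𝔐₀^lin ∪ 𝓥_#) is a subspace of 𝖡; in particular 𝔐₀^lin ⊆ span(X) ⊆ 𝖡 and 𝓥_# ⊆ 𝖡. -/
import Mathlib


open Matrix

/-- `R (XᵀX)⁻¹ Xᵀ`, the 1×n row vector whose i-th entry is `R(X'X)⁻¹xᵢ·'`. -/
noncomputable def cRow {n k : ℕ} (X : Matrix (Fin n) (Fin k) ℝ)
    (R : Matrix (Fin 1) (Fin k) ℝ) : Matrix (Fin 1) (Fin n) ℝ :=
  R * (Xᵀ * X)⁻¹ * Xᵀ

/-- OLS estimator `β̂(y) = (X'X)⁻¹X'y`. -/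
noncomputable def betaHat {n k : ℕ} (X : Matrix (Fin n) (Fin k) ℝ)
    (y : Fin n → ℝ) : Fin k → ℝ :=
  ((Xᵀ * X)⁻¹ * Xᵀ).mulVec y

/-- Residual vector `û(y) = y - Xβ̂(y)`. -/
noncomputable def uHat {n k : ℕ} (X : Matrix (Fin n) (Fin k) ℝ)
    (y : Fin n → ℝ) : Fin n → ℝ :=
  y - X.mulVec (betaHat X y)

/-- `B(y) = R(X'X)⁻¹X' diag(û₁(y),…,ûₙ(y))`, viewed as a vector in ℝⁿ. -/
noncomputable def Bmap {n k : ℕ} (X : Matrix (Fin n) (Fin k) ℝ)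
    (R : Matrix (Fin 1) (Fin k) ℝ) (y : Fin n → ℝ) : Fin n → ℝ :=
  fun i => cRow X R 0 i * uHat X y i

/-- The set `𝖡 = {y : B(y) = 0}`. -/
noncomputable def Bset {n k : ℕ} (X : Matrix (Fin n) (Fin k) ℝ)
    (R : Matrix (Fin 1) (Fin k) ℝ) : Set (Fin n → ℝ) :=
  {y | Bmap X R y = 0}

/-- `Ω̂_Het(y) = R(X'X)⁻¹X' diag(d₁û₁²(y),…,dₙûₙ²(y)) X(X'X)⁻¹R'`. -/
noncomputable def OmegaHat {n k : ℕ} (X : Matrix (Fin n) (Fin k) ℝ)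
    (R : Matrix (Fin 1) (Fin k) ℝ) (d : Fin n → ℝ) (y : Fin n → ℝ) : ℝ :=
  (R * (Xᵀ * X)⁻¹ * Xᵀ * Matrix.diagonal (fun i => d i * (uHat X y i) ^ 2) *
    X * (Xᵀ * X)⁻¹ * Rᵀ) 0 0

/-- Heteroskedasticity robust test statistic `T_Het`. -/
noncomputable def THet {n k : ℕ} (X : Matrix (Fin n) (Fin k) ℝ)
    (R : Matrix (Fin 1) (Fin k) ℝ) (d : Fin n → ℝ) (r : ℝ) (y : Fin n → ℝ) : ℝ :=
  if OmegaHat X R d y ≠ 0 then (R.mulVec (betaHat X y) 0 - r) ^ 2 / OmegaHat X R d y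
  else 0

/-- `𝔐₀^lin = {Xβ : Rβ = 0}`. -/
def M0lin {n k : ℕ} (X : Matrix (Fin n) (Fin k) ℝ)
    (R : Matrix (Fin 1) (Fin k) ℝ) : Set (Fin n → ℝ) :=
  {y | ∃ β : Fin k → ℝ, y = X.mulVec β ∧ R.mulVec β 0 = 0}

/-- `𝓥_# = span{eᵢ(n) : i ∈ 𝓘_#, eᵢ(n) ∈ 𝖡}`. -/
noncomputable def Vsharp {n k : ℕ} (X : Matrix (Fin n) (Fin k) ℝ)
    (R : Matrix (Fin 1) (Fin k) ℝ) : Submodule ℝ (Fin n → ℝ) :=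
  Submodule.span ℝ ((fun i => (Pi.single i 1 : Fin n → ℝ)) ''
    {i | cRow X R 0 i = 0 ∧ (Pi.single i 1 : Fin n → ℝ) ∈ Bset X R})

/-- `𝓛_# = span(𝔐₀^lin ∪ 𝓥_#)`. -/
noncomputable def Lsharp {n k : ℕ} (X : Matrix (Fin n) (Fin k) ℝ)
    (R : Matrix (Fin 1) (Fin k) ℝ) : Submodule ℝ (Fin n → ℝ) :=
  Submodule.span ℝ (M0lin X R ∪ (Vsharp X R : Set (Fin n → ℝ)))

lemma aux_isUnit {n k : ℕ} (X : Matrix (Fin n) (Fin k) ℝ) (hX : X.rank = k) :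
    IsUnit (Xᵀ * X) := by
  rw [← Matrix.mulVec_surjective_iff_isUnit]
  have h1 : (Xᵀ * X).rank = k := by rw [Matrix.rank_transpose_mul_self, hX]
  have h2 : LinearMap.range (Xᵀ * X).mulVecLin = ⊤ := by
    apply Submodule.eq_top_of_finrank_eq
    rw [← Matrix.rank, h1, Module.finrank_pi, Fintype.card_fin]
  intro y
  have := h2 ▸ Submodule.mem_top (x := y) (R := ℝ)
  obtain ⟨x, hx⟩ := this
  exact ⟨x, hx⟩

lemma uHat_mulVec {n k : ℕ} (X : Matrix (Fin n) (Fin k) ℝ) (hX : X.rank = k)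
    (β : Fin k → ℝ) : uHat X (X.mulVec β) = 0 := by
  have h := aux_isUnit X hX
  have hdet : IsUnit (Xᵀ * X).det := (Matrix.isUnit_iff_isUnit_det _).mp h
  unfold uHat betaHat
  simp only [Matrix.mulVec_mulVec]
  have hm : X * ((Xᵀ * X)⁻¹ * Xᵀ * X) = X := by
    rw [Matrix.mul_assoc (Xᵀ * X)⁻¹ Xᵀ X, Matrix.nonsing_inv_mul _ hdet, Matrix.mul_one]
  rw [hm, sub_self]

noncomputable def BSub {n k : ℕ} (X : Matrix (Fin n) (Fin k) ℝ)
    (R : Matrix (Fin 1) (Fin k) ℝ) : Submodule ℝ (Fin n → ℝ) where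
  carrier := Bset X R
  zero_mem' := by
    show Bmap X R 0 = 0
    funext i
    simp [Bmap, uHat, betaHat, Matrix.mulVec_zero]
  add_mem' := by
    intro a b ha hb
    have ha' : Bmap X R a = 0 := ha
    have hb' : Bmap X R b = 0 := hb
    show Bmap X R (a + b) = 0
    funext i
    have h1 := congrFun ha' i
    have h2 := congrFun hb' i
    simp only [Bmap, uHat, betaHat, Pi.zero_apply] at *
    simp only [Matrix.mulVec_add, Pi.add_apply, Pi.sub_apply] at *
    linear_combination h1 + h2
  smul_mem' := by
    intro c a ha
    have ha' : Bmap X R a = 0 := ha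
    show Bmap X R (c • a) = 0
    funext i
    have h1 := congrFun ha' i
    simp only [Bmap, uHat, betaHat, Pi.zero_apply] at *
    simp only [Matrix.mulVec_smul, Pi.smul_apply, Pi.sub_apply, smul_eq_mul] at *
    linear_combination c * h1

theorem stmt12    {n k : ℕ} (hk : 1 ≤ k) (hkn : k < n)
    (X : Matrix (Fin n) (Fin k) ℝ) (hX : X.rank = k)
    (R : Matrix (Fin 1) (Fin k) ℝ) (hR : R ≠ 0) :
    (Lsharp X R : Set (Fin n → ℝ)) ⊆ Bset X R ∧
    M0lin X R ⊆ Set.range X.mulVec ∧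
    Set.range X.mulVec ⊆ Bset X R ∧
    (Vsharp X R : Set (Fin n → ℝ)) ⊆ Bset X R := by
  have hrange : Set.range X.mulVec ⊆ Bset X R := by
    rintro _ ⟨β, rfl⟩
    show Bmap X R _ = 0
    funext i
    simp [Bmap, uHat_mulVec X hX β]
  have hM0 : M0lin X R ⊆ Set.range X.mulVec := by
    rintro _ ⟨β, rfl, -⟩
    exact ⟨β, rfl⟩
  have hV : (Vsharp X R : Set (Fin n → ℝ)) ⊆ Bset X R := by
    have h : Vsharp X R ≤ BSub X R := by
      apply Submodule.span_le.mpr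
      rintro _ ⟨i, ⟨-, hi2⟩, rfl⟩
      exact hi2
    exact h
  refine ⟨?_, hM0, hrange, hV⟩
  have h : Lsharp X R ≤ BSub X R := by
    apply Submodule.span_le.mpr
    rintro y (hy | hy)
    · exact hrange (hM0 hy)
    · exact hV hy
  exact h
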